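/- arXiv:2410.17553 — 2 statements merged into one kernel-verified Lean document; each statement's English description precedes it below -/
import Mathlib

section
/- Let n ≥ 3, 1 ≤ τ ≤ n − 2, e = n(n−1)/2, and let v = (V^{(1)},…,V^{(τ)}) ∈ ℝ^{nτ} be such that the nτ real numbers {V_i^{(k)}} are algebraically independent over ℚ. Then the stacked voltage coefficient matrix A(v) ∈ ℝ^{nτ×e} has rank nτ − τ(τ+1)/2 < e; equivalently, the linear map y ↦ A(v)y on ℝ^e has a nontrivial kernel, so no right-hand side i ∈ ℝ^{nτ} determines y uniquely from i = A(v)y. Hence τ = n − 1 is the minimum number of measurements for which a generic stack of measurements uniquely determines y. -/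
/-!
Up to reordering its columns, `A(v)ᵀ` is the rigidity matrix of the complete graph on the `n`
points `x i = (V_i^(1), …, V_i^(τ)) ∈ F^τ`, so the left kernel of `A(v)` is the space of
infinitesimal motions `u` of this framework: `⟪x i - x j, u i - u j⟫ = 0` for all `i, j`.
When `τ + 1` of the points are affinely independent (true for generic measurements, because a
nonzero polynomial determinant does not vanish on them), the only motions are the trivial ones
`u i = S x i + t` with `S` skew-symmetric, a space of dimension `τ(τ-1)/2 + τ = τ(τ+1)/2`.
Hence `rank A(v) = nτ - τ(τ+1)/2`, which is smaller than `e = n(n-1)/2` for `τ ≤ n - 2` and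
equal to it for `τ = n - 1`. Generic real stacks of every size exist since `ℝ` has infinite
transcendence degree over `ℚ`.
-/

open Matrix BigOperators

/-- Edges of the complete graph on `Fin n`: ordered pairs `(i, j)` with `i < j`. -/
abbrev CEdge (n : ℕ) := {p : Fin n × Fin n // p.1 < p.2}

/-- Incidence matrix of the complete graph on `Fin n`, each edge `(i, j)` (with `i < j`)
oriented from `i` to `j`:  `H i l = 1` if edge `l` leaves node `i`, `-1` if it enters `i`,
and `0` otherwise. -/
def incid (F : Type*) [Field F] (n : ℕ) : Matrix (Fin n) (CEdge n) F :=
  Matrix.of fun i l => if i = l.val.1 then 1 else if i = l.val.2 then -1 else 0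

/-- Voltage coefficient matrix `Ã(V) = H ⬝ diag(Hᵀ V)`. -/
def Atilde {F : Type*} [Field F] {n : ℕ} (V : Fin n → F) : Matrix (Fin n) (CEdge n) F :=
  incid F n * Matrix.diagonal ((incid F n)ᵀ *ᵥ V)

/-- Stacked voltage coefficient matrix `A(v)` for `τ` measurements `v 1, …, v τ`:
the row indexed by `(k, i)` is the `i`-th row of `Ã(V^(k))`. -/
def Astack {F : Type*} [Field F] {n τ : ℕ} (v : Fin τ → Fin n → F) :
    Matrix (Fin τ × Fin n) (CEdge n) F :=
  Matrix.of fun p l => Atilde (v p.1) p.2 l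

/-- Rigidity matrix of the complete graph at the configuration `x = (x 1, …, x n)`,
`x i ∈ F^τ`: the row indexed by edge `(i, j)`, `i < j`, has the entries of `(x i − x j)ᵀ`
in the `τ` columns of node `i`, the entries of `(x j − x i)ᵀ` in the `τ` columns of node `j`,
and zeros elsewhere. -/
def rigidityM {F : Type*} [Field F] {n τ : ℕ} (x : Fin n → Fin τ → F) :
    Matrix (CEdge n) (Fin n × Fin τ) F :=
  Matrix.of fun l p =>
    if p.1 = l.val.1 then x l.val.1 p.2 - x l.val.2 p.2
    else if p.1 = l.val.2 then x l.val.2 p.2 - x l.val.1 p.2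
    else 0

open Function

lemma Fintype.sum_ite_eq_ite_eq {α M : Type*} [Fintype α] [DecidableEq α] [AddCommMonoid M]
    {a b : α} (hab : a ≠ b) (f g : α → M) :
    ∑ i, (if i = a then f i else if i = b then g i else 0) = f a + g b := by
  rw [Fintype.sum_eq_add a b hab fun i hi => by simp [hi.1, hi.2]]
  simp [hab.symm]

lemma Matrix.dotProduct_sub_transpose_mulVec_self {m R : Type*} [Fintype m] [CommRing R]
    (U : Matrix m m R) (w : m → R) : w ⬝ᵥ ((U - Uᵀ) *ᵥ w) = 0 := by
  rw [sub_mulVec, dotProduct_sub, mulVec_transpose, dotProduct_mulVec, dotProduct_comm, sub_self]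

lemma Matrix.eq_zero_of_mulVec_rows_eq_zero {m R : Type*} [Fintype m] [DecidableEq m]
    [CommRing R] [IsDomain R] {M Z : Matrix m m R} (hZ : Z.det ≠ 0) (h : ∀ a, M *ᵥ Z a = 0) :
    M = 0 :=
  funext fun k => eq_zero_of_mulVec_eq_zero hZ <| funext fun a =>
    (dotProduct_comm _ _).trans (congrFun (h a) k)

lemma Matrix.rank_add_finrank_ker {m l K : Type*} [Fintype l] [Field K] (A : Matrix m l K) :
    A.rank + Module.finrank K (LinearMap.ker A.mulVecLin) = Fintype.card l := by
  rw [Matrix.rank, LinearMap.finrank_range_add_finrank_ker, Module.finrank_fintype_fun_eq_card]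

lemma Matrix.exists_mulVec_eq_zero_of_rank_lt {m l K : Type*} [Fintype l] [Field K]
    {A : Matrix m l K} (h : A.rank < Fintype.card l) : ∃ y ≠ 0, A *ᵥ y = 0 := by
  have hpos : 0 < Module.finrank K (LinearMap.ker A.mulVecLin) := by
    have := A.rank_add_finrank_ker
    omega
  obtain ⟨⟨y, hy⟩, hne⟩ := Module.finrank_pos_iff_exists_ne_zero.mp hpos
  exact ⟨y, fun h => hne (Subtype.ext h), hy⟩

lemma Matrix.mulVec_injective_of_rank_eq {m l K : Type*} [Fintype l] [Field K]
    {A : Matrix m l K} (h : A.rank = Fintype.card l) : Injective A.mulVec := by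
  have hzero : Module.finrank K (LinearMap.ker A.mulVecLin) = 0 := by
    have := A.rank_add_finrank_ker
    omega
  exact LinearMap.ker_eq_bot.mp (Submodule.finrank_eq_zero.mp hzero)

lemma dotProduct_polarization {ι m R : Type*} [Fintype m] [CommRing R] {x u : ι → m → R}
    (h : ∀ i j, (x i - x j) ⬝ᵥ (u i - u j) = 0) (i j o : ι) :
    (x i - x o) ⬝ᵥ (u j - u o) = -((x j - x o) ⬝ᵥ (u i - u o)) := by
  have hij := h i j
  have hio := h i o
  have hjo := h j o
  simp only [sub_dotProduct, dotProduct_sub] at *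
  linear_combination hio + hjo - hij

theorem exists_algebraicIndependent_real (ι : Type*) [Finite ι] :
    ∃ f : ι → ℝ, AlgebraicIndependent ℚ f := by
  obtain ⟨s, hs⟩ := exists_isTranscendenceBasis ℚ ℝ
  have : Infinite s := by
    by_contra hfin
    have : Finite s := not_infinite_iff_finite.mp hfin
    let K := Algebra.adjoin ℚ (Set.range ((↑) : s → ℝ))
    have : Algebra.IsAlgebraic K ℝ := hs.isAlgebraic
    have hK : Cardinal.mk K ≤ Cardinal.aleph0 :=
      (Algebra.cardinalMk_adjoin_le _ _).trans (max_le (max_le Cardinal.mk_le_aleph0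
        (Set.finite_range _).lt_aleph0.le) le_rfl)
    have hR := Algebra.IsAlgebraic.cardinalMk_le_max K ℝ
    rw [Cardinal.mk_real] at hR
    exact Cardinal.aleph0_lt_continuum.not_ge (hR.trans (max_le hK le_rfl))
  let g : ι ↪ s :=
    (Finite.equivFin ι).toEmbedding.trans (Fin.valEmbedding.trans (Infinite.natEmbedding s))
  exact ⟨_, hs.1.comp g g.injective⟩

lemma card_CEdge (n : ℕ) : Fintype.card (CEdge n) = n * (n - 1) / 2 := by
  rw [Fintype.card_subtype, Fintype.card_product_filter_lt, Fintype.card_fin, Nat.choose_two_right]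

lemma mul_sub_triangle_lt {n τ : ℕ} (h : τ + 2 ≤ n) :
    n * τ - τ * (τ + 1) / 2 < n * (n - 1) / 2 := by
  obtain ⟨m, rfl⟩ : ∃ m, n = τ + 2 + m := ⟨n - (τ + 2), by omega⟩
  rw [show τ + 2 + m - 1 = τ + 1 + m by omega]
  have ha := Nat.two_mul_div_two_of_even (Nat.even_mul_succ_self τ)
  have hb := Nat.two_mul_div_two_of_even (Nat.even_mul_succ_self (τ + 1 + m))
  rw [show τ + 1 + m + 1 = τ + 2 + m by omega] at hb
  have : (τ + 2 + m) * τ < τ * (τ + 1) / 2 + (τ + 1 + m) * (τ + 2 + m) / 2 := by nlinarith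
  have hpos : 2 ≤ (τ + 1 + m) * (τ + 2 + m) := by nlinarith
  rw [mul_comm (τ + 2 + m) (τ + 1 + m)]
  omega

def upperOfEdges {R : Type*} [CommRing R] {τ : ℕ} :
    (CEdge τ → R) →ₗ[R] Matrix (Fin τ) (Fin τ) R where
  toFun c := of fun a b => if h : a < b then c ⟨(a, b), h⟩ else 0
  map_add' c d := by ext a b; by_cases h : a < b <;> simp [h]
  map_smul' r c := by ext a b; by_cases h : a < b <;> simp [h]

lemma upperOfEdges_sub_transpose_apply {R : Type*} [CommRing R] {τ : ℕ} (c : CEdge τ → R)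
    (e : CEdge τ) : (upperOfEdges c - (upperOfEdges c)ᵀ) e.1.1 e.1.2 = c e := by
  simp [upperOfEdges, e.2, not_lt_of_gt e.2]

/-- Its determinant is nonzero iff the points `x (p 0), …, x (p τ)` are affinely independent. -/
def diffMatrix {R : Type*} [Sub R] {n τ : ℕ} (x : Fin n → Fin τ → R)
    (p : Fin (τ + 1) → Fin n) : Matrix (Fin τ) (Fin τ) R :=
  of fun a => x (p a.succ) - x (p 0)

lemma diffMatrix_apply {R : Type*} [Sub R] {n τ : ℕ} (x : Fin n → Fin τ → R)
    (p : Fin (τ + 1) → Fin n) (a : Fin τ) : diffMatrix x p a = x (p a.succ) - x (p 0) :=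
  rfl

lemma RingHom.map_det_diffMatrix {R S : Type*} [CommRing R] [CommRing S] (f : R →+* S)
    {n τ : ℕ} (x : Fin n → Fin τ → R) (p : Fin (τ + 1) → Fin n) :
    f (diffMatrix x p).det = (diffMatrix (fun i k => f (x i k)) p).det := by
  rw [RingHom.map_det]
  congr 1
  ext a k
  simp [diffMatrix_apply]

theorem AlgebraicIndependent.det_diffMatrix_ne_zero {R A : Type*} [CommRing R] [Nontrivial R]
    [CommRing A] [Algebra R A] {n τ : ℕ} {x : Fin n → Fin τ → A}
    (hx : AlgebraicIndependent R fun q : Fin n × Fin τ => x q.1 q.2) {p : Fin (τ + 1) → Fin n}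
    (hp : Injective p) : (diffMatrix x p).det ≠ 0 := by
  let X : Fin n → Fin τ → MvPolynomial (Fin n × Fin τ) R := fun i k => MvPolynomial.X (i, k)
  have hX : (diffMatrix X p).det ≠ 0 := by
    intro h
    let e : Fin n × Fin τ → R := fun q => if q.1 = p q.2.succ then 1 else 0
    have h1 := (MvPolynomial.eval e).map_det_diffMatrix X p
    have hone : diffMatrix (fun i k => MvPolynomial.eval e (X i k)) p = 1 := by
      ext a k
      simp [e, diffMatrix_apply, X, one_apply, hp.eq_iff, (Fin.succ_ne_zero k).symm]
    rw [h, map_zero, hone, det_one] at h1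
    exact zero_ne_one h1
  intro h0
  refine hX (hx ?_)
  have h1 :=
    (MvPolynomial.aeval fun q : Fin n × Fin τ => x q.1 q.2).toRingHom.map_det_diffMatrix X p
  simp only [X, AlgHom.toRingHom_eq_coe, RingHom.coe_coe, MvPolynomial.aeval_X] at h1
  rw [map_zero]
  exact h1.trans h0

variable {F : Type*} [Field F] {n τ : ℕ}

lemma rigidityM_mulVec (x : Fin n → Fin τ → F) (y : Fin n × Fin τ → F) (l : CEdge n) :
    (rigidityM x *ᵥ y) l = (x l.1.1 - x l.1.2) ⬝ᵥ (curry y l.1.1 - curry y l.1.2) := by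
  simp only [rigidityM, mulVec, dotProduct, of_apply, Fintype.sum_prod_type, ite_mul, zero_mul,
    Finset.sum_ite_irrel, Finset.sum_const_zero]
  rw [Fintype.sum_ite_eq_ite_eq l.2.ne, ← Finset.sum_add_distrib]
  exact Finset.sum_congr rfl fun k _ => by simp only [Pi.sub_apply, curry_apply]; ring

lemma rigidityM_mulVec_eq_zero_iff {x : Fin n → Fin τ → F} {y : Fin n × Fin τ → F} :
    rigidityM x *ᵥ y = 0 ↔ ∀ i j, (x i - x j) ⬝ᵥ (curry y i - curry y j) = 0 := by
  refine ⟨fun h i j => ?_, fun h => funext fun l => by rw [rigidityM_mulVec, h, Pi.zero_apply]⟩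
  rcases lt_trichotomy i j with hij | rfl | hij
  · simpa [rigidityM_mulVec] using congrFun h ⟨(i, j), hij⟩
  · simp
  · rw [← neg_sub (x j), ← neg_sub (curry y j), neg_dotProduct_neg]
    simpa [rigidityM_mulVec] using congrFun h ⟨(j, i), hij⟩

/-- Infinitesimal rotations and translations `u i = S x i + t`, with the skew-symmetric `S`
parametrised by its entries above the diagonal. -/
def trivialMotion (x : Fin n → Fin τ → F) :
    ((CEdge τ → F) × (Fin τ → F)) →ₗ[F] (Fin n × Fin τ → F) where
  toFun ct := uncurry fun i => (upperOfEdges ct.1 - (upperOfEdges ct.1)ᵀ) *ᵥ x i + ct.2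
  map_add' ct ct' := by
    ext ⟨i, k⟩
    simp only [uncurry_apply_pair, Prod.fst_add, Prod.snd_add, map_add, transpose_add, Pi.add_apply,
      add_sub_add_comm, add_mulVec]
    ring
  map_smul' r ct := by
    ext ⟨i, k⟩
    simp only [uncurry_apply_pair, Prod.smul_fst, Prod.smul_snd, map_smul, transpose_smul,
      ← smul_sub, smul_mulVec, Pi.add_apply, Pi.smul_apply, smul_eq_mul, RingHom.id_apply]
    ring

lemma curry_trivialMotion (x : Fin n → Fin τ → F) (ct : (CEdge τ → F) × (Fin τ → F))
    (i : Fin n) :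
    curry (trivialMotion x ct) i = (upperOfEdges ct.1 - (upperOfEdges ct.1)ᵀ) *ᵥ x i + ct.2 :=
  rfl

lemma rigidityM_mulVec_trivialMotion (x : Fin n → Fin τ → F)
    (ct : (CEdge τ → F) × (Fin τ → F)) : rigidityM x *ᵥ trivialMotion x ct = 0 := by
  refine rigidityM_mulVec_eq_zero_iff.mpr fun i j => ?_
  rw [curry_trivialMotion, curry_trivialMotion, add_sub_add_right_eq_sub, ← mulVec_sub,
    dotProduct_sub_transpose_mulVec_self]

lemma trivialMotion_injective {x : Fin n → Fin τ → F} {p : Fin (τ + 1) → Fin n}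
    (hx : (diffMatrix x p).det ≠ 0) : Injective (trivialMotion x) := by
  rw [← LinearMap.ker_eq_bot, LinearMap.ker_eq_bot']
  rintro ⟨c, t⟩ h
  set S := upperOfEdges c - (upperOfEdges c)ᵀ
  have hpt (i : Fin n) : S *ᵥ x i + t = 0 := congrFun (congrArg curry h) i
  have hS : S = 0 := eq_zero_of_mulVec_rows_eq_zero hx fun a => by
    rw [diffMatrix_apply, mulVec_sub, ← add_sub_add_right_eq_sub _ _ t, hpt, hpt, sub_self]
  have hc : c = 0 := funext fun e => by
    rw [← upperOfEdges_sub_transpose_apply c e]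
    exact congrFun (congrFun hS _) _
  have ht : t = 0 := by simpa [hS] using hpt (p 0)
  rw [hc, ht]
  rfl

/-- An infinitesimal motion `u` is determined by `u (p 0)` and the pairings
`⟪x (p (a+1)) - x (p 0), u (p (b+1)) - u (p 0)⟫` for `a < b`: the pairings for `a ≥ b` follow
by antisymmetry. -/
def motionProbe (x : Fin n → Fin τ → F) (p : Fin (τ + 1) → Fin n) :
    (Fin n × Fin τ → F) →ₗ[F] (CEdge τ → F) × (Fin τ → F) where
  toFun y :=
    (fun e => diffMatrix x p e.1.1 ⬝ᵥ (curry y (p e.1.2.succ) - curry y (p 0)), curry y (p 0))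
  map_add' y y' := by
    refine Prod.ext (funext fun e => ?_) rfl
    change _ ⬝ᵥ ((curry y _ + curry y' _) - (curry y _ + curry y' _)) = _
    rw [add_sub_add_comm, dotProduct_add]
    rfl
  map_smul' r y := by
    refine Prod.ext (funext fun e => ?_) rfl
    change _ ⬝ᵥ (r • curry y _ - r • curry y _) = _
    rw [← smul_sub, dotProduct_smul]
    rfl

lemma eq_zero_of_motionProbe_eq_zero {x : Fin n → Fin τ → F} {p : Fin (τ + 1) → Fin n}
    (hx : (diffMatrix x p).det ≠ 0) {y : Fin n × Fin τ → F}
    (hy : rigidityM x *ᵥ y = 0) (hprobe : motionProbe x p y = 0) : y = 0 := by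
  rw [rigidityM_mulVec_eq_zero_iff] at hy
  set u := curry y
  have hdot (e : CEdge τ) : diffMatrix x p e.1.1 ⬝ᵥ (u (p e.1.2.succ) - u (p 0)) = 0 :=
    congrFun (congrArg Prod.fst hprobe) e
  have hbase : u (p 0) = 0 := congrArg Prod.snd hprobe
  have hpinned (b : Fin τ) : u (p b.succ) - u (p 0) = 0 := by
    refine eq_zero_of_mulVec_eq_zero hx (funext fun a => ?_)
    rcases lt_trichotomy a b with hab | rfl | hab
    · exact hdot ⟨(a, b), hab⟩
    · exact hy _ _
    · rw [Pi.zero_apply, mulVec, diffMatrix_apply, dotProduct_polarization hy,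
        ← diffMatrix_apply, hdot ⟨(b, a), hab⟩, neg_zero]
  have hall (i : Fin n) : u i - u (p 0) = 0 := by
    refine eq_zero_of_mulVec_eq_zero hx (funext fun a => ?_)
    rw [Pi.zero_apply, mulVec, diffMatrix_apply, dotProduct_polarization hy, hpinned,
      dotProduct_zero, neg_zero]
  ext ⟨i, k⟩
  simpa [hbase, u] using congrFun (hall i) k

lemma finrank_ker_rigidityM {x : Fin n → Fin τ → F} {p : Fin (τ + 1) → Fin n}
    (hx : (diffMatrix x p).det ≠ 0) :
    Module.finrank F (LinearMap.ker (rigidityM x).mulVecLin) = τ * (τ - 1) / 2 + τ := by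
  have hdom : Module.finrank F ((CEdge τ → F) × (Fin τ → F)) = τ * (τ - 1) / 2 + τ := by
    simp [Module.finrank_prod, card_CEdge]
  have hprobe : Injective
      ((motionProbe x p).comp (LinearMap.ker (rigidityM x).mulVecLin).subtype) := by
    rw [← LinearMap.ker_eq_bot, LinearMap.ker_eq_bot']
    rintro ⟨y, hy⟩ h
    exact Subtype.ext (eq_zero_of_motionProbe_eq_zero hx (LinearMap.mem_ker.mp hy) h)
  have hmotion : Injective ((trivialMotion x).codRestrict (LinearMap.ker (rigidityM x).mulVecLin)
      fun ct => LinearMap.mem_ker.mpr (rigidityM_mulVec_trivialMotion x ct)) :=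
    fun ct ct' h => trivialMotion_injective hx (congrArg Subtype.val h)
  rw [← hdom]
  exact le_antisymm (LinearMap.finrank_le_finrank_of_injective hprobe)
    (LinearMap.finrank_le_finrank_of_injective hmotion)

lemma rank_rigidityM {x : Fin n → Fin τ → F} {p : Fin (τ + 1) → Fin n}
    (hx : (diffMatrix x p).det ≠ 0) : (rigidityM x).rank = n * τ - τ * (τ + 1) / 2 := by
  have h := (rigidityM x).rank_add_finrank_ker
  rw [finrank_ker_rigidityM hx, Fintype.card_prod, Fintype.card_fin, Fintype.card_fin] at h
  have htri : τ * (τ + 1) / 2 = τ * (τ - 1) / 2 + τ := by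
    rw [mul_comm, ← Nat.triangle_succ, Nat.add_sub_cancel]
  omega

lemma transpose_incid_mulVec (f : Fin n → F) (l : CEdge n) :
    ((incid F n)ᵀ *ᵥ f) l = f l.1.1 - f l.1.2 := by
  simp only [incid, mulVec, dotProduct, transpose_apply, of_apply, ite_mul, one_mul, neg_one_mul,
    zero_mul]
  rw [Fintype.sum_ite_eq_ite_eq l.2.ne, sub_eq_add_neg]

lemma transpose_Astack (v : Fin τ → Fin n → F) :
    (Astack v)ᵀ = (rigidityM (Function.swap v)).submatrix id Prod.swap := by
  ext l ⟨k, i⟩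
  simp only [transpose_apply, Astack, Atilde, of_apply, mul_diagonal]
  rw [transpose_incid_mulVec]
  simp only [submatrix_apply, id, Prod.swap_prod_mk, rigidityM, incid, of_apply, Function.swap]
  split_ifs <;> ring

lemma rank_Astack_eq_rank_rigidityM (v : Fin τ → Fin n → F) :
    (Astack v).rank = (rigidityM (Function.swap v)).rank := by
  rw [← rank_transpose (Astack v), transpose_Astack]
  exact rank_submatrix (rigidityM (Function.swap v)) (Equiv.refl _) (Equiv.prodComm _ _)

theorem rank_Astack_of_algebraicIndependent {R : Type*} [CommRing R] [Nontrivial R] [Algebra R F]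
    (h : τ + 1 ≤ n) {v : Fin τ → Fin n → F}
    (hv : AlgebraicIndependent R fun q : Fin τ × Fin n => v q.1 q.2) :
    (Astack v).rank = n * τ - τ * (τ + 1) / 2 := by
  have hx : AlgebraicIndependent R fun q : Fin n × Fin τ => Function.swap v q.1 q.2 :=
    hv.comp Prod.swap Prod.swap_injective
  rw [rank_Astack_eq_rank_rigidityM]
  exact rank_rigidityM (p := Fin.castLE h) (hx.det_diffMatrix_ne_zero (Fin.castLE_injective h))

theorem exists_ne_zero_Astack_mulVec_eq_zero {R : Type*} [CommRing R] [Nontrivial R]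
    [Algebra R F] (h : τ + 2 ≤ n) {v : Fin τ → Fin n → F}
    (hv : AlgebraicIndependent R fun q : Fin τ × Fin n => v q.1 q.2) :
    ∃ y ≠ 0, Astack v *ᵥ y = 0 := by
  refine exists_mulVec_eq_zero_of_rank_lt ?_
  rw [rank_Astack_of_algebraicIndependent (by omega) hv, card_CEdge]
  exact mul_sub_triangle_lt h

theorem Astack_mulVec_injective {R : Type*} [CommRing R] [Nontrivial R] [Algebra R F]
    (h : τ + 1 = n) {v : Fin τ → Fin n → F}
    (hv : AlgebraicIndependent R fun q : Fin τ × Fin n => v q.1 q.2) :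
    Injective (Astack v).mulVec := by
  refine mulVec_injective_of_rank_eq ?_
  rw [rank_Astack_of_algebraicIndependent h.le hv, card_CEdge, ← h, Nat.add_sub_cancel,
    mul_comm (τ + 1)]
  have := Nat.two_mul_div_two_of_even (Nat.even_mul_succ_self τ)
  omega

theorem stmt5_general (n τ : ℕ) (hn : 3 ≤ n) (hτ2 : τ ≤ n - 2)
    (v : Fin τ → Fin n → ℝ)
    (hgen : AlgebraicIndependent ℚ (fun p : Fin τ × Fin n => v p.1 p.2)) :
    (Astack v).rank = n * τ - τ * (τ + 1) / 2 ∧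
    n * τ - τ * (τ + 1) / 2 < n * (n - 1) / 2 ∧
    (∃ y : CEdge n → ℝ, y ≠ 0 ∧ Astack v *ᵥ y = 0) ∧
    (∀ (i : Fin τ × Fin n → ℝ) (y : CEdge n → ℝ),
        i = Astack v *ᵥ y → ∃ y' : CEdge n → ℝ, y' ≠ y ∧ i = Astack v *ᵥ y') ∧
    IsLeast {τ' : ℕ |
        ∀ v' : Fin τ' → Fin n → ℝ,
          AlgebraicIndependent ℚ (fun p : Fin τ' × Fin n => v' p.1 p.2) →
          Function.Injective (fun y : CEdge n → ℝ => Astack v' *ᵥ y)}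
      (n - 1) := by
  have hτ : τ + 2 ≤ n := by omega
  obtain ⟨y₀, hy₀, hAy₀⟩ := exists_ne_zero_Astack_mulVec_eq_zero hτ hgen
  refine ⟨rank_Astack_of_algebraicIndependent (by omega) hgen, mul_sub_triangle_lt hτ,
    ⟨y₀, hy₀, hAy₀⟩,
    fun i y hi => ⟨y + y₀, by simpa using hy₀, by rw [mulVec_add, hAy₀, add_zero, hi]⟩,
    fun v' hv' => Astack_mulVec_injective (τ := n - 1) (by omega) hv', fun m hm => ?_⟩
  by_contra! hlt
  obtain ⟨f, hf⟩ := exists_algebraicIndependent_real (Fin m × Fin n)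
  set v' : Fin m → Fin n → ℝ := fun k i => f (k, i)
  obtain ⟨y, hy, hAy⟩ := exists_ne_zero_Astack_mulVec_eq_zero (v := v') (by omega) hf
  exact hy (hm v' hf (hAy.trans (mulVec_zero _).symm))

/-- with `1 ≤ τ ≤ n − 2` generic real measurements, `A(v)` has rank
`nτ − τ(τ+1)/2 < e`, so `y ↦ A(v)y` has a nontrivial kernel and no right-hand side
determines `y` uniquely; hence `τ = n − 1` is the minimum number of measurements for
which a generic stack of measurements uniquely determines `y`. -/
theorem stmt5 (n τ : ℕ) (hn : 3 ≤ n) (hτ1 : 1 ≤ τ) (hτ2 : τ ≤ n - 2)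
    (v : Fin τ → Fin n → ℝ)
    (hgen : AlgebraicIndependent ℚ (fun p : Fin τ × Fin n => v p.1 p.2)) :
    (Astack v).rank = n * τ - τ * (τ + 1) / 2 ∧
    n * τ - τ * (τ + 1) / 2 < n * (n - 1) / 2 ∧
    (∃ y : CEdge n → ℝ, y ≠ 0 ∧ Astack v *ᵥ y = 0) ∧
    (∀ (i : Fin τ × Fin n → ℝ) (y : CEdge n → ℝ),
        i = Astack v *ᵥ y → ∃ y' : CEdge n → ℝ, y' ≠ y ∧ i = Astack v *ᵥ y') ∧
    IsLeast {τ' : ℕ |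
        ∀ v' : Fin τ' → Fin n → ℝ,
          AlgebraicIndependent ℚ (fun p : Fin τ' × Fin n => v' p.1 p.2) →
          Function.Injective (fun y : CEdge n → ℝ => Astack v' *ᵥ y)}
      (n - 1) :=
  stmt5_general n τ hn hτ2 v hgen
end

section
/- Let n ≥ τ ≥ 1, e = n(n−1)/2, and let v = (V^{(1)},…,V^{(τ)}) ∈ ℂ^{nτ} be such that the nτ complex numbers {V_i^{(k)} : 1 ≤ i ≤ n, 1 ≤ k ≤ τ} are algebraically independent over ℚ. Then the stacked voltage coefficient matrix A(v) ∈ ℂ^{nτ×e} has rank (over ℂ) equal to nτ − τ(τ+1)/2. -/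
open Matrix BigOperators

/-!
Column `l` of `A(v)` is the flattening of `P * (h hᵀ)`, where `P` is the `τ × n` matrix of
measurements and `h` is column `l` of the incidence matrix. The rank-one matrices `h hᵀ` form a
basis of the space `U` of symmetric matrices with zero row sums (the Laplacians of edge-weighted
complete graphs), so `rank A(v) = dim P U = e - dim {S ∈ U | P S = 0}`. That kernel consists of
the symmetric matrices whose columns lie in `K = ker Q`, where `Q` is `P` with a row of ones
appended, and therefore has dimension `d (d + 1) / 2` for `d = dim K`. For algebraically
independent measurements `Q` has the generic rank `min (τ + 1) n`, because a maximal minor of `Q`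
specialises to a nonzero rational number; the count then gives `n τ - τ (τ + 1) / 2`.
-/

open Module

lemma Matrix.IsSymm.mul_mul_transpose {α ι κ : Type*} [CommSemiring α] [Fintype ι]
    {S : Matrix ι ι α} (hS : S.IsSymm) (C : Matrix κ ι α) : (C * S * Cᵀ).IsSymm := by
  rw [IsSymm, transpose_mul, transpose_mul, transpose_transpose, hS.eq, Matrix.mul_assoc]

lemma Submodule.finrank_map_add_finrank_inf_ker {K V W : Type*} [DivisionRing K] [AddCommGroup V]
    [Module K V] [FiniteDimensional K V] [AddCommGroup W] [Module K W] (f : V →ₗ[K] W)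
    (U : Submodule K V) :
    finrank K (U.map f) + finrank K ↥(U ⊓ LinearMap.ker f) = finrank K U := by
  have h := (f.domRestrict U).finrank_range_add_finrank_ker
  rw [LinearMap.range_domRestrict, LinearMap.ker_domRestrict] at h
  rwa [← (Submodule.comapSubtypeEquivOfLe (inf_le_left : U ⊓ LinearMap.ker f ≤ U)).finrank_eq,
    Submodule.comap_inf, Submodule.comap_subtype_self, top_inf_eq]

lemma Matrix.ker_mulVecLin_fromRows {R m₁ m₂ ι : Type*} [CommRing R] [Fintype ι]
    (A₁ : Matrix m₁ ι R) (A₂ : Matrix m₂ ι R) :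
    LinearMap.ker (fromRows A₁ A₂).mulVecLin =
      LinearMap.ker A₁.mulVecLin ⊓ LinearMap.ker A₂.mulVecLin := by
  ext x
  simp only [LinearMap.mem_ker, mulVecLin_apply, fromRows_mulVec, Submodule.mem_inf]
  rw [← Sum.elim_zero_zero, Sum.elim_eq_iff]

lemma Matrix.finrank_ker_mulVecLin {K m ι : Type*} [Field K] [Fintype ι] (A : Matrix m ι K) :
    finrank K (LinearMap.ker A.mulVecLin) = Fintype.card ι - A.rank := by
  have h := A.mulVecLin.finrank_range_add_finrank_ker
  rw [finrank_fintype_fun_eq_card] at h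
  rw [rank]
  omega

section SymmetricWithin

variable {F ι : Type*} [Field F] [Fintype ι]

def symmetricWithin (K : Submodule F (ι → F)) : Submodule F (Matrix ι ι F) where
  carrier := {S | S.IsSymm ∧ ∀ x, S *ᵥ x ∈ K}
  add_mem' := fun ⟨hS, hSK⟩ ⟨hT, hTK⟩ =>
    ⟨hS.add hT, fun x => by rw [add_mulVec]; exact K.add_mem (hSK x) (hTK x)⟩
  zero_mem' := ⟨isSymm_zero, fun x => by rw [zero_mulVec]; exact K.zero_mem⟩
  smul_mem' := fun c S ⟨hS, hSK⟩ =>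
    ⟨hS.smul c, fun x => by rw [smul_mulVec]; exact K.smul_mem c (hSK x)⟩

lemma mem_symmetricWithin_top {S : Matrix ι ι F} :
    S ∈ symmetricWithin (⊤ : Submodule F (ι → F)) ↔ S.IsSymm :=
  and_iff_left fun _ => trivial

lemma symmetricWithin_inf_ker_mulLeftLinearMap {m : Type*} [Fintype m] (K : Submodule F (ι → F))
    (P : Matrix m ι F) :
    symmetricWithin K ⊓ LinearMap.ker (mulLeftLinearMap ι F P) =
      symmetricWithin (K ⊓ LinearMap.ker P.mulVecLin) := by
  ext S
  simp only [Submodule.mem_inf, LinearMap.mem_ker, mulLeftLinearMap_apply]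
  constructor
  · rintro ⟨⟨hS, hSK⟩, hPS⟩
    exact ⟨hS, fun x => ⟨hSK x, by simp [mulVec_mulVec, hPS]⟩⟩
  · rintro ⟨hS, hSK⟩
    exact ⟨⟨hS, fun x => (hSK x).1⟩,
      mulVec_injective (funext fun x => by simpa [mulVec_mulVec] using (hSK x).2)⟩

def symmetricWithinTopEquiv :
    symmetricWithin (⊤ : Submodule F (ι → F)) ≃ₗ[F] (Sym2 ι → F) where
  toFun S := Sym2.lift ⟨fun i j => S.1 i j, fun i j => (S.2.1.apply i j).symm⟩
  invFun f := ⟨of fun i j => f s(i, j), mem_symmetricWithin_top.2 <| by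
    ext i j; simp [Sym2.eq_swap]⟩
  map_add' S T := by ext z; induction z using Sym2.ind; rfl
  map_smul' c S := by ext z; induction z using Sym2.ind; rfl
  left_inv S := by ext i j; rfl
  right_inv f := by ext z; induction z using Sym2.ind; rfl

lemma finrank_symmetricWithin_top :
    finrank F (symmetricWithin (⊤ : Submodule F (ι → F))) =
      (Fintype.card ι + 1).choose 2 := by
  rw [symmetricWithinTopEquiv.finrank_eq, finrank_fintype_fun_eq_card, Sym2.card]

lemma exists_leftInverse_range_mulVecLin_eq [DecidableEq ι] (K : Submodule F (ι → F)) :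
    ∃ (B : Matrix ι (Fin (finrank F K)) F) (B' : Matrix (Fin (finrank F K)) ι F),
      B' * B = 1 ∧ LinearMap.range B.mulVecLin = K := by
  let f := K.subtype ∘ₗ (finBasis F K).equivFun.symm.toLinearMap
  obtain ⟨g, hg⟩ := f.exists_leftInverse_of_injective <| LinearMap.ker_eq_bot.2 <|
    K.injective_subtype.comp (finBasis F K).equivFun.symm.injective
  refine ⟨LinearMap.toMatrix' f, LinearMap.toMatrix' g, ?_, ?_⟩
  · rw [← LinearMap.toMatrix'_comp, hg, LinearMap.toMatrix'_id]
  · rw [← toLin'_apply', toLin'_toMatrix', LinearMap.range_comp, LinearEquiv.range,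
      Submodule.map_top, K.range_subtype]

section RangeEquiv

variable {κ : Type*} [Fintype κ] [DecidableEq κ] {B : Matrix ι κ F} {B' : Matrix κ ι F}

lemma mul_mul_cancel_of_mem_symmetricWithin (h : B' * B = 1) {S : Matrix ι ι F}
    (hS : S ∈ symmetricWithin (LinearMap.range B.mulVecLin)) : B * B' * S = S := by
  refine mulVec_injective (funext fun x => ?_)
  obtain ⟨y, hy⟩ := hS.2 x
  rw [← mulVec_mulVec, ← hy, mulVecLin_apply, mulVec_mulVec, Matrix.mul_assoc, h,
    Matrix.mul_one]

def symmetricWithinRangeEquiv (h : B' * B = 1) :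
    symmetricWithin (LinearMap.range B.mulVecLin) ≃ₗ[F]
      symmetricWithin (⊤ : Submodule F (κ → F)) where
  toFun S := ⟨B' * S.1 * B'ᵀ, mem_symmetricWithin_top.2 (IsSymm.mul_mul_transpose S.2.1 B')⟩
  invFun T := ⟨B * T.1 * Bᵀ, IsSymm.mul_mul_transpose T.2.1 B, fun x => by
    rw [Matrix.mul_assoc, ← mulVec_mulVec]
    exact LinearMap.mem_range_self _ _⟩
  map_add' S T := by ext1; simp [Matrix.mul_add, Matrix.add_mul]
  map_smul' c S := by ext1; simp
  left_inv := by
    rintro ⟨S, hS⟩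
    have hBS := mul_mul_cancel_of_mem_symmetricWithin h hS
    have hsymm : Sᵀ = S := hS.1
    ext1
    calc B * (B' * S * B'ᵀ) * Bᵀ = B * B' * S * (B * B')ᵀ := by
          simp only [transpose_mul, Matrix.mul_assoc]
      _ = (B * B' * Sᵀ)ᵀ := by rw [hBS, transpose_mul _ Sᵀ, transpose_transpose]
      _ = S := by rw [hsymm, hBS, hsymm]
  right_inv := by
    rintro ⟨T, -⟩
    ext1
    calc B' * (B * T * Bᵀ) * B'ᵀ = B' * B * T * (B' * B)ᵀ := by
          simp only [transpose_mul, Matrix.mul_assoc]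
      _ = T := by rw [h, transpose_one, Matrix.one_mul, Matrix.mul_one]

end RangeEquiv

lemma finrank_symmetricWithin [DecidableEq ι] (K : Submodule F (ι → F)) :
    finrank F (symmetricWithin K) = (finrank F K + 1).choose 2 := by
  obtain ⟨B, B', h, hK⟩ := exists_leftInverse_range_mulVecLin_eq K
  conv_lhs => rw [← hK]
  rw [(symmetricWithinRangeEquiv h).finrank_eq, finrank_symmetricWithin_top, Fintype.card_fin]

end SymmetricWithin

abbrev onesRow (R : Type*) [One R] (n : ℕ) : Matrix Unit (Fin n) R := replicateRow Unit 1

section Incidence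

variable {F : Type*} [Field F] {n : ℕ}

variable (F n) in
abbrev laplacianSpace : Submodule F (Matrix (Fin n) (Fin n) F) :=
  symmetricWithin (LinearMap.ker (onesRow F n).mulVecLin)

lemma card_cEdge : Fintype.card (CEdge n) = n.choose 2 := by
  rw [Fintype.card_subtype, Fintype.card_product_filter_lt, Fintype.card_fin]

lemma incid_transpose_apply (l : CEdge n) :
    (incid F n)ᵀ l = Pi.single l.1.1 1 - Pi.single l.1.2 1 := by
  obtain ⟨⟨a, b⟩, hab⟩ := l
  funext i
  simp only [transpose_apply, incid, of_apply, Pi.sub_apply, Pi.single_apply]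
  split_ifs <;> simp_all [hab.ne]

lemma onesRow_mulVec_incid_transpose (l : CEdge n) : onesRow F n *ᵥ (incid F n)ᵀ l = 0 := by
  rw [incid_transpose_apply, mulVec_sub, mulVec_single_one, mulVec_single_one, sub_eq_zero]
  rfl

def edgeMatrix (l : CEdge n) : Matrix (Fin n) (Fin n) F :=
  vecMulVec ((incid F n)ᵀ l) ((incid F n)ᵀ l)

lemma edgeMatrix_mem_laplacianSpace (l : CEdge n) : edgeMatrix l ∈ laplacianSpace F n := by
  refine ⟨transpose_vecMulVec _ _, fun x => ?_⟩
  simp only [edgeMatrix, LinearMap.mem_ker, mulVecLin_apply, vecMulVec_mulVec,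
    op_smul_eq_smul, mulVec_smul, onesRow_mulVec_incid_transpose, smul_zero]

-- The off-diagonal entries of a Laplacian are minus the edge weights.
def edgeWeights : Matrix (Fin n) (Fin n) F →ₗ[F] (CEdge n → F) where
  toFun S l := -S l.1.1 l.1.2
  map_add' S T := by ext l; simp [add_comm]
  map_smul' c S := by ext l; simp

lemma edgeWeights_edgeMatrix (l : CEdge n) :
    edgeWeights (edgeMatrix (F := F) l) = Pi.single l 1 := by
  obtain ⟨⟨a, b⟩, hab⟩ := l
  ext ⟨⟨a', b'⟩, hab'⟩
  simp only [edgeWeights, edgeMatrix, LinearMap.coe_mk, AddHom.coe_mk, vecMulVec_apply,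
    incid_transpose_apply, Pi.sub_apply, Pi.single_apply, Subtype.mk.injEq, Prod.mk.injEq]
  split_ifs <;> simp_all [lt_asymm hab]

lemma eq_zero_of_edgeWeights_eq_zero {S : Matrix (Fin n) (Fin n) F}
    (hS : S ∈ laplacianSpace F n) (h : edgeWeights S = 0) : S = 0 := by
  have hoff : ∀ i j, i ≠ j → S i j = 0 := by
    intro i j hij
    rcases hij.lt_or_gt with hlt | hlt
    · simpa [edgeWeights] using congrFun h ⟨(i, j), hlt⟩
    · rw [← hS.1.apply]
      simpa [edgeWeights] using congrFun h ⟨(j, i), hlt⟩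
  ext i j
  by_cases hij : i = j
  · subst hij
    have hcol : ∑ j, S j i = 0 := by
      simpa [mulVec, dotProduct] using congrFun (hS.2 (Pi.single i 1)) ()
    rwa [Finset.sum_eq_single i (fun j _ hj => hoff j i hj) (by simp)] at hcol
  · exact hoff i j hij

lemma linearIndependent_edgeMatrix : LinearIndependent F (edgeMatrix (F := F) (n := n)) :=
  LinearIndependent.of_comp edgeWeights <| by
    simpa [Function.comp_def, edgeWeights_edgeMatrix] using
      Pi.linearIndependent_single_one (CEdge n) F

lemma span_range_edgeMatrix : Submodule.span F (Set.range edgeMatrix) = laplacianSpace F n := by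
  refine Submodule.eq_of_le_of_finrank_le
    (Submodule.span_le.2 (Set.range_subset_iff.2 edgeMatrix_mem_laplacianSpace)) ?_
  rw [finrank_span_eq_card linearIndependent_edgeMatrix, ← finrank_fintype_fun_eq_card (R := F)]
  refine LinearMap.finrank_le_finrank_of_injective
    (f := edgeWeights.domRestrict (laplacianSpace F n)) ?_
  rw [← LinearMap.ker_eq_bot, LinearMap.ker_eq_bot']
  exact fun S hS => Subtype.ext (eq_zero_of_edgeWeights_eq_zero S.2 hS)

lemma finrank_laplacianSpace : finrank F (laplacianSpace F n) = n.choose 2 := by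
  rw [← span_range_edgeMatrix, finrank_span_eq_card linearIndependent_edgeMatrix, card_cEdge]

lemma Astack_apply {τ : ℕ} (v : Fin τ → Fin n → F) (k : Fin τ) (i : Fin n) (l : CEdge n) :
    Astack v (k, i) l = (of v * edgeMatrix l : Matrix (Fin τ) (Fin n) F) k i := by
  change Atilde (v k) i l = ∑ j, v k j * (incid F n j l * incid F n i l)
  rw [Atilde, mul_diagonal]
  change incid F n i l * ∑ j, incid F n j l * v k j = _
  rw [Finset.mul_sum]
  exact Finset.sum_congr rfl fun j _ => by ring

lemma rank_Astack_eq_finrank_map {τ : ℕ} (v : Fin τ → Fin n → F) :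
    (Astack v).rank =
      finrank F ((laplacianSpace F n).map (mulLeftLinearMap (Fin n) F (of v))) := by
  let e : Matrix (Fin τ) (Fin n) F ≃ₗ[F] (Fin τ × Fin n → F) :=
    (ofLinearEquiv F).symm ≪≫ₗ (LinearEquiv.curry F F (Fin τ) (Fin n)).symm
  have hcol : (Astack v).col =
      (e : _ →ₗ[F] _) ∘ mulLeftLinearMap (Fin n) F (of v) ∘ edgeMatrix := by
    ext l ⟨k, i⟩
    exact Astack_apply v k i l
  rw [rank_eq_finrank_span_cols, hcol, Set.range_comp, Submodule.span_image,
    LinearEquiv.finrank_map_eq, Set.range_comp, Submodule.span_image, span_range_edgeMatrix]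

variable (F) in
def augmentedVoltages {τ : ℕ} (v : Fin τ → Fin n → F) :
    Matrix (Fin τ ⊕ Unit) (Fin n) F :=
  fromRows (of v) (onesRow F n)

theorem rank_Astack {τ : ℕ} (v : Fin τ → Fin n → F) :
    (Astack v).rank = n.choose 2 - (n - (augmentedVoltages F v).rank + 1).choose 2 := by
  have h := Submodule.finrank_map_add_finrank_inf_ker (mulLeftLinearMap (Fin n) F (of v))
    (laplacianSpace F n)
  rw [symmetricWithin_inf_ker_mulLeftLinearMap, inf_comm, ← ker_mulVecLin_fromRows,
    finrank_symmetricWithin, finrank_ker_mulVecLin, Fintype.card_fin, finrank_laplacianSpace] at h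
  rw [rank_Astack_eq_finrank_map, augmentedVoltages]
  exact Nat.eq_sub_of_add_eq h

end Incidence

section Generic

open MvPolynomial

lemma AlgebraicIndependent.det_map_aeval_ne_zero {ι m R A : Type*} [CommRing R] [CommRing A]
    [Algebra R A] [Fintype m] [DecidableEq m] {x : ι → A} (hx : AlgebraicIndependent R x)
    {M : Matrix m m (MvPolynomial ι R)} (σ : ι → R) (hσ : (M.map (aeval σ)).det ≠ 0) :
    (M.map (aeval x)).det ≠ 0 := by
  rw [← AlgHom.mapMatrix_apply, ← AlgHom.map_det] at hσ ⊢
  exact (map_ne_zero_iff _ hx).2 fun h => hσ (by rw [h, map_zero])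

lemma AlgebraicIndependent.card_le_rank_map_aeval {ι m k m₀ R K : Type*} [CommRing R] [Field K]
    [Algebra R K] [Fintype k] [Fintype m₀] [DecidableEq m₀] {x : ι → K}
    (hx : AlgebraicIndependent R x) (M : Matrix m k (MvPolynomial ι R)) (r : m₀ → m)
    (c : m₀ → k) (σ : ι → R) (hσ : ((M.submatrix r c).map (aeval σ)).det ≠ 0) :
    Fintype.card m₀ ≤ (M.map (aeval x)).rank := by
  have hdet := hx.det_map_aeval_ne_zero σ hσ
  rw [← submatrix_map] at hdet
  calc Fintype.card m₀ = ((M.map (aeval x)).submatrix r c).rank :=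
        (rank_of_isUnit _ ((isUnit_iff_isUnit_det _).2 hdet.isUnit)).symm
    _ ≤ (M.map (aeval x)).rank := rank_submatrix_le _ _ _

lemma augmentedVoltages_eq_map_aeval {R F : Type*} [CommRing R] [Field F] [Algebra R F]
    {n τ : ℕ} (v : Fin τ → Fin n → F) :
    augmentedVoltages F v = (fromRows (mvPolynomialX (Fin τ) (Fin n) R) (onesRow _ n)).map
      (aeval fun p : Fin τ × Fin n => v p.1 p.2) := by
  ext (k | u) j <;> simp [augmentedVoltages]

theorem rank_augmentedVoltages_of_algebraicIndependent {R F : Type*} [CommRing R] [Nontrivial R]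
    [Field F] [Algebra R F] {n τ : ℕ} (hn : τ ≤ n) {v : Fin τ → Fin n → F}
    (hv : AlgebraicIndependent R fun p : Fin τ × Fin n => v p.1 p.2) :
    (augmentedVoltages F v).rank = min (τ + 1) n := by
  refine le_antisymm (le_min ?_ ?_) ?_
  · simpa using rank_le_card_height (augmentedVoltages F v)
  · simpa using rank_le_card_width (augmentedVoltages F v)
  rw [augmentedVoltages_eq_map_aeval (R := R)]
  set Q := fromRows (mvPolynomialX (Fin τ) (Fin n) R) (onesRow _ n)
  rcases hn.lt_or_eq with hlt | rfl
  · let c : Fin τ ⊕ Unit → Fin n := Sum.elim (Fin.castLE hn) fun _ => ⟨τ, hlt⟩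
    let σ : Fin τ × Fin n → R := fun p => if Fin.castLE hn p.1 = p.2 then 1 else 0
    have hσ : (Q.submatrix id c).map (aeval σ) = fromBlocks 1 0 (of fun _ _ => 1) 1 := by
      ext (i | i) (j | j) <;> simp [Q, c, σ, one_apply, Fin.ext_iff]
      omega
    have hrank := hv.card_le_rank_map_aeval Q id c σ (by rw [hσ, det_fromBlocks_zero₁₂]; simp)
    exact (min_le_left _ _).trans (by simpa using hrank)
  · let σ : Fin τ × Fin τ → R := fun p => if p.1 = p.2 then 1 else 0
    have hσ : (Q.submatrix Sum.inl id).map (aeval σ) = 1 := by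
      ext i j
      simp [Q, σ, one_apply]
    have hrank :=
      hv.card_le_rank_map_aeval Q Sum.inl id σ (by rw [hσ, det_one]; exact one_ne_zero)
    exact (min_le_right _ _).trans (by simpa using hrank)

end Generic

lemma Nat.add_choose_two (a b : ℕ) : (a + b).choose 2 = a.choose 2 + a * b + b.choose 2 := by
  simp [Nat.add_choose_eq, Finset.Nat.antidiagonal_succ]
  ring

lemma Nat.choose_two_mul_two_add_self (a : ℕ) : a.choose 2 * 2 + a = a * a := by
  induction a with
  | zero => rfl
  | succ t ih => rw [Nat.choose_succ_succ', Nat.choose_one_right]; nlinarith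

lemma Nat.add_choose_two_sub_choose_two (τ m : ℕ) :
    (τ + m).choose 2 - m.choose 2 = (τ + m) * τ - τ * (τ + 1) / 2 := by
  have htri : τ * (τ + 1) / 2 = τ.choose 2 + τ := by
    have h₁ : (τ + 1).choose 2 = τ.choose 1 + τ.choose 2 := Nat.choose_succ_succ' τ 1
    have h₂ := Nat.choose_two_right (τ + 1)
    rw [Nat.choose_one_right] at h₁
    rw [Nat.add_sub_cancel, mul_comm] at h₂
    omega
  have hsq := Nat.choose_two_mul_two_add_self τ
  rw [Nat.add_choose_two, htri, add_mul, mul_comm m τ]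
  omega

theorem stmt8_general (n τ : ℕ) (hn : τ ≤ n) (v : Fin τ → Fin n → ℂ)
    (hgen : AlgebraicIndependent ℚ (fun p : Fin τ × Fin n => v p.1 p.2)) :
    (Astack v).rank = n * τ - τ * (τ + 1) / 2 := by
  rw [rank_Astack, rank_augmentedVoltages_of_algebraicIndependent hn hgen]
  obtain ⟨m, rfl⟩ := Nat.exists_eq_add_of_le hn
  have hd : (τ + m - min (τ + 1) (τ + m) + 1).choose 2 = m.choose 2 := by
    rcases m with _ | m
    · simp
    · rw [min_eq_left (by omega), show τ + (m + 1) - (τ + 1) + 1 = m + 1 by omega]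
  rw [hd, Nat.add_choose_two_sub_choose_two]

/-- with `n ≥ τ ≥ 1` generic complex measurements, the stacked voltage
coefficient matrix `A(v) ∈ ℂ^{nτ×e}` has rank `nτ − τ(τ+1)/2` over `ℂ`. -/
theorem stmt8 (n τ : ℕ) (hτ : 1 ≤ τ) (hn : τ ≤ n) (v : Fin τ → Fin n → ℂ)
    (hgen : AlgebraicIndependent ℚ (fun p : Fin τ × Fin n => v p.1 p.2)) :
    (Astack v).rank = n * τ - τ * (τ + 1) / 2 :=
  stmt8_general n τ hn v hgen
end
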